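/- Let K be a field, α : ℕ → K a sequence of nonzero scalars, and β : ℕ → K a sequence of nonzero scalars with β_0 = 1. Let φ be a continuous linear endomorphism of V̂ (product topology over discrete K). Then there exists a sequence of polynomials (P_n)_{n∈ℕ} in K[x] such that φ is the sum of the summable family (R̂_α^n ∘ P_n(L̂_β))_{n∈ℕ}: explicitly, for every S ∈ V̂ and every k ∈ ℕ, (φ S)(k) = Σ_{n=0}^{k} ( R̂_α^n ( P_n(L̂_β)(S) ) )(k), where for a polynomial P, P(L̂_β) := Σ_j ⟨P,x^j⟩ L̂_β^j, and the terms with n > k vanish because (R̂_α^n T)(k) = 0 for n > k. -/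

import Mathlib

/-!
A continuous functional on `ℕ → K` depends on finitely many coordinates, and
`S ↦ (P(L̂) S)(0)` realises every such finite combination, because `(L̂^j S)(0)` is a nonzero
multiple of `S(j)`. Hence `φ = P₀(L̂) + ψ` with `(ψ S)(0) = 0`, and `ψ = R̂ ∘ φ₁` for a continuous
`φ₁`, since `R̂` is injective with image the sequences vanishing at `0`. Iterating,
`φ = Σ_{n ≤ k} R̂ⁿ Pₙ(L̂) + R̂^{k+1} φ_{k+1}`, and the last term vanishes in coordinate `k`.
-/

/-- The "extended lowering"-type operator on `V̂ = ℕ → K` with coefficients `γ`: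
`(S)(n) ↦ γ_n·S(n+1)`. -/
def lowOp (K : Type*) [Field K] (γ : ℕ → K) : (ℕ → K) →ₗ[K] (ℕ → K) where
  toFun S := fun n => γ n * S (n + 1)
  map_add' S T := by funext n; simp [mul_add]
  map_smul' c S := by funext n; simp [mul_left_comm]

/-- The "extended raising"-type operator on `V̂ = ℕ → K` with coefficients `γ`:
`(S)(0) ↦ 0`, `(S)(n+1) ↦ γ_n·S(n)`. -/
def raiseOp (K : Type*) [Field K] (γ : ℕ → K) : (ℕ → K) →ₗ[K] (ℕ → K) where
  toFun S := fun n => match n with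
    | 0 => 0
    | n + 1 => γ n * S n
  map_add' S T := by funext n; cases n <;> simp [mul_add]
  map_smul' c S := by funext n; cases n <;> simp [mul_left_comm]

open Finset Polynomial

theorem eq_sum_pow_mul_add_pow_mul_iterate {M ι : Type*} [Semiring M] (a q : ι → M) (r : M)
    (next : ι → ι) (h : ∀ i, a i = q i + r * a (next i)) (i : ι) (k : ℕ) :
    a i = ∑ n ∈ range k, r ^ n * q (next^[n] i) + r ^ k * a (next^[k] i) := by
  induction k with
  | zero => simp
  | succ k ih =>
    rw [ih, h (next^[k] i), ← Function.iterate_succ_apply' next, sum_range_succ, pow_succ,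
      mul_add, mul_assoc, add_assoc]

section

variable {K : Type*} [Field K]

theorem raiseOp_pow_apply_of_lt (γ : ℕ → K) {n k : ℕ} (hkn : k < n) (T : ℕ → K) :
    (raiseOp K γ ^ n) T k = 0 := by
  induction n generalizing k with
  | zero => omega
  | succ n ih =>
    rw [pow_succ', Module.End.mul_apply]
    cases k with
    | zero => rfl
    | succ k => exact (congrArg (γ k * ·) (ih (by omega))).trans (mul_zero _)

theorem raiseOp_lowOp_inv_of_apply_zero {α : ℕ → K} (hα : ∀ n, α n ≠ 0) {T : ℕ → K}
    (hT : T 0 = 0) :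
    raiseOp K α (lowOp K (fun n => (α n)⁻¹) T) = T := by
  funext n
  cases n with
  | zero => exact hT.symm
  | succ n => exact mul_inv_cancel_left₀ (hα n) _

theorem lowOp_pow_apply_zero (γ : ℕ → K) (j : ℕ) (S : ℕ → K) :
    (lowOp K γ ^ j) S 0 = (∏ i ∈ range j, γ i) * S j := by
  induction j generalizing S with
  | zero => simp
  | succ j ih =>
    rw [pow_succ, Module.End.mul_apply, ih, prod_range_succ, mul_assoc]
    rfl

theorem exists_aeval_lowOp_apply_zero {γ : ℕ → K} (hγ : ∀ n, γ n ≠ 0) (N : ℕ) (c : ℕ → K) :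
    ∃ P : K[X], ∀ S, aeval (lowOp K γ) P S 0 = ∑ m ∈ range N, c m * S m := by
  refine ⟨∑ m ∈ range N, C (c m / ∏ i ∈ range m, γ i) * X ^ m, fun S => ?_⟩
  simp only [map_sum, map_mul, aeval_C, map_pow, aeval_X, LinearMap.sum_apply, Finset.sum_apply,
    Module.End.mul_apply, Module.algebraMap_end_apply, Pi.smul_apply, smul_eq_mul,
    lowOp_pow_apply_zero]
  refine sum_congr rfl fun m _ => ?_
  rw [← mul_assoc, div_mul_cancel₀ _ (prod_ne_zero_iff.mpr fun i _ => hγ i)]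

variable [TopologicalSpace K] [DiscreteTopology K]

theorem continuous_lowOp (γ : ℕ → K) : Continuous (lowOp K γ) :=
  continuous_pi fun n => continuous_of_discreteTopology.comp (continuous_apply (n + 1))

theorem continuous_aeval_lowOp (γ : ℕ → K) (P : K[X]) : Continuous (aeval (lowOp K γ) P) := by
  rw [aeval_eq_sum_range, LinearMap.coe_sum, Finset.sum_fn]
  refine continuous_finsetSum _ fun i _ => ?_
  rw [LinearMap.coe_smul, Module.End.coe_pow]
  exact ((continuous_lowOp γ).iterate i).const_smul _

theorem exists_eq_sum_single_mul_of_continuous (f : (ℕ → K) →ₗ[K] K) (hf : Continuous f) :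
    ∃ N, ∀ S, f S = ∑ m ∈ range N, f (Pi.single m 1) * S m := by
  have hker : f ⁻¹' {0} ∈ nhds (0 : ℕ → K) :=
    hf.continuousAt.preimage_mem_nhds (by rw [map_zero]; exact (isOpen_discrete _).mem_nhds rfl)
  rw [nhds_pi, Filter.mem_pi] at hker
  obtain ⟨I, hI, t, ht, hIt⟩ := hker
  obtain ⟨b, hb⟩ := hI.bddAbove
  refine ⟨b + 1, fun S => ?_⟩
  -- `S - S'` vanishes on `[0, b] ⊇ I`, so it lies in the basic neighbourhood `I.pi t ⊆ ker f`.
  set S' := ∑ m ∈ range (b + 1), S m • Pi.single m (1 : K)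
  have hS' : ∀ m ≤ b, S' m = S m := by
    intro m hm
    simp [S', Pi.single_apply, hm]
  have hdiff : f (S - S') = 0 := hIt fun i hi => by
    rw [Pi.sub_apply, hS' i (hb hi), sub_self]
    exact mem_of_mem_nhds (ht i)
  rw [map_sub, sub_eq_zero] at hdiff
  simp [hdiff, S', mul_comm]

theorem exists_eq_aeval_lowOp_add_raiseOp_mul {α γ : ℕ → K} (hα : ∀ n, α n ≠ 0)
    (hγ : ∀ n, γ n ≠ 0) (φ : (ℕ → K) →L[K] (ℕ → K)) :
    ∃ (P : K[X]) (ψ : (ℕ → K) →L[K] (ℕ → K)),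
      (φ : Module.End K (ℕ → K)) = aeval (lowOp K γ) P + raiseOp K α * ψ := by
  obtain ⟨N, hN⟩ := exists_eq_sum_single_mul_of_continuous
    (LinearMap.proj 0 ∘ₗ (φ : Module.End K (ℕ → K))) ((continuous_apply 0).comp φ.continuous)
  obtain ⟨P, hP⟩ := exists_aeval_lowOp_apply_zero hγ N fun m => φ (Pi.single m 1) 0
  let D : (ℕ → K) →L[K] (ℕ → K) := φ - ⟨aeval (lowOp K γ) P, continuous_aeval_lowOp γ P⟩
  refine ⟨P, ⟨lowOp K fun n => (α n)⁻¹, continuous_lowOp _⟩ ∘L D, LinearMap.ext fun S => ?_⟩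
  have hD : D S 0 = 0 := sub_eq_zero.mpr ((hN S).trans (hP S).symm)
  change φ S = aeval (lowOp K γ) P S + raiseOp K α (lowOp K (fun n => (α n)⁻¹) (D S))
  rw [raiseOp_lowOp_inv_of_apply_zero hα hD]
  simp [D]

end

theorem stmt_18_general (K : Type*) [Field K] (α β : ℕ → K)
    (hα : ∀ n, α n ≠ 0) (hβ : ∀ n, β n ≠ 0)
    (φ : (ℕ → K) →ₗ[K] (ℕ → K))
    (hφ : @Continuous (ℕ → K) (ℕ → K)
      (@Pi.topologicalSpace ℕ (fun _ => K) (fun _ => ⊥))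
      (@Pi.topologicalSpace ℕ (fun _ => K) (fun _ => ⊥)) φ) :
    ∃ P : ℕ → Polynomial K, ∀ (S : ℕ → K) (k : ℕ),
      φ S k = ∑ n ∈ Finset.range (k + 1),
        (((raiseOp K α) ^ n)
          ((Polynomial.aeval (lowOp K fun m => β (m + 1)) (P n)) S)) k := by
  let _ : TopologicalSpace K := ⊥
  have : DiscreteTopology K := ⟨rfl⟩
  choose P next hnext using
    exists_eq_aeval_lowOp_add_raiseOp_mul (γ := fun m => β (m + 1)) hα fun m => hβ (m + 1)
  let φ' : (ℕ → K) →L[K] (ℕ → K) := ⟨φ, hφ⟩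
  refine ⟨fun n => P (next^[n] φ'), fun S k => ?_⟩
  have hexp := eq_sum_pow_mul_add_pow_mul_iterate
    (fun ψ : (ℕ → K) →L[K] (ℕ → K) => (ψ : Module.End K (ℕ → K))) _ _ next hnext φ' (k + 1)
  rw [show φ = φ' from rfl, hexp]
  simp [raiseOp_pow_apply_of_lt α (Nat.lt_succ_self k)]

/-- Every continuous linear endomorphism `φ` of `V̂ = ℕ → K` (product topology over
discrete `K`) is the sum of a summable family `(R̂_α^n ∘ P_n(L̂_β))_n` for some
polynomials `P_n`; here `(L̂_β S)(n) = β_{n+1}·S(n+1)` and `(R̂_α S)(0) = 0`,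
`(R̂_α S)(n+1) = α_n·S(n)`.  Explicitly, for every `S` and `k`,
`(φS)(k) = Σ_{n=0}^{k} (R̂_α^n(P_n(L̂_β)(S)))(k)`, the terms with `n > k` vanishing. -/
theorem stmt_18 (K : Type*) [Field K] (α β : ℕ → K)
    (hα : ∀ n, α n ≠ 0) (hβ : ∀ n, β n ≠ 0) (hβ0 : β 0 = 1)
    (φ : (ℕ → K) →ₗ[K] (ℕ → K))
    (hφ : @Continuous (ℕ → K) (ℕ → K)
      (@Pi.topologicalSpace ℕ (fun _ => K) (fun _ => ⊥))
      (@Pi.topologicalSpace ℕ (fun _ => K) (fun _ => ⊥)) φ) :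
    ∃ P : ℕ → Polynomial K, ∀ (S : ℕ → K) (k : ℕ),
      φ S k = ∑ n ∈ Finset.range (k + 1),
        (((raiseOp K α) ^ n)
          ((Polynomial.aeval (lowOp K fun m => β (m + 1)) (P n)) S)) k :=
  stmt_18_general K α β hα hβ φ hφ
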